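/- Let x, y, θ̄ satisfy 0 ≤ x ≤ y, 0 < θ̄ < y, x + θ̄ > 0. Set t₋ = −xy(x+θ̄)/(θ̄(x+y)) and let A be as in the rank-one direction of the boundary argument: A has rows (1, c) and (−c, −c²) with c = √((y−θ̄)/(x+θ̄)). Then the Frobenius norm of diag(x,y) + t₋A equals (xy + θ̄(y−x))/θ̄, i.e. ‖diag(x,y)+t₋A‖² = ((xy + θ̄(y−x))/θ̄)². -/
import Mathlib


/-- Frobenius norm squared of a 2×2 real matrix. -/
noncomputable def frobSq (ξ : Matrix (Fin 2) (Fin 2) ℝ) : ℝ := ∑ i, ∑ j, (ξ i j) ^ 2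

theorem frob_norm_at_t_minus (x y θ : ℝ) (hx0 : 0 ≤ x) (hxy : x ≤ y)
    (hθ0 : 0 < θ) (hθy : θ < y) (hxθ : 0 < x + θ) :
    let c : ℝ := Real.sqrt ((y - θ) / (x + θ))
    let A : Matrix (Fin 2) (Fin 2) ℝ := !![1, c; -c, -c ^ 2]
    let tm : ℝ := -(x * y * (x + θ)) / (θ * (x + y))
    frobSq (!![x, 0; 0, y] + tm • A) = ((x * y + θ * (y - x)) / θ) ^ 2 := by
  intro c A tm
  have hxy0 : 0 < x + y := by linarith
  have hc2 : c ^ 2 = (y - θ) / (x + θ) := by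
    apply Real.sq_sqrt
    apply div_nonneg <;> linarith
  simp only [frobSq, Fin.sum_univ_two, A, Matrix.add_apply, Matrix.smul_apply,
    Matrix.of_apply, Matrix.cons_val', Matrix.cons_val_zero, Matrix.cons_val_one,
    Matrix.head_cons, Matrix.empty_val', Matrix.cons_val_fin_one, Matrix.head_fin_const, smul_eq_mul]
  have h1 : (tm * c) ^ 2 = tm ^ 2 * ((y - θ) / (x + θ)) := by rw [mul_pow, hc2]
  have h2 : (tm * -c) ^ 2 = tm ^ 2 * ((y - θ) / (x + θ)) := by
    rw [mul_pow, neg_pow, hc2]; ring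
  rw [show tm * -c ^ 2 = -(tm * c ^ 2) by ring, hc2]
  rw [show (x + tm * 1) ^ 2 + (0 + tm * c) ^ 2 + ((0 + tm * -c) ^ 2
      + (y + -(tm * ((y - θ) / (x + θ)))) ^ 2)
      = (x + tm) ^ 2 + (tm * c) ^ 2 + (tm * -c) ^ 2
      + (y - tm * ((y - θ) / (x + θ))) ^ 2 by ring, h1, h2]
  simp only [tm]
  have hθ : θ ≠ 0 := ne_of_gt hθ0
  have hxθ' : x + θ ≠ 0 := ne_of_gt hxθ
  have hxy' : x + y ≠ 0 := ne_of_gt hxy0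
  field_simp
  ring
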